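/- Consider a layer y = a·(xW_t) where W_0 has entries of standard deviation b and the update rule is W_{t+1} = W_t + c·Φ_t for a fixed update direction sequence Φ_t. For any θ > 0, replacing (a, b, c) by (aθ, b/θ, c/θ) and W_t by W_t/θ leaves the output y unchanged at every training step t. -/

import Mathlib

open Matrix

/-- abc-equivalence: consider a layer `y = a • (x ᵥ* W t)` where the update rule is
`W (t+1) = W t + c • Φ t` for a fixed update-direction sequence `Φ`. For any `θ > 0`,
replacing `(a, b, c)` by `(a*θ, b/θ, c/θ)` and `W t` by `W t / θ` (so `W' 0 = (1/θ) • W 0`,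
with `W' (t+1) = W' t + (c/θ) • Φ t`) leaves the output unchanged at every step `t`:
`(a*θ) • (x ᵥ* W' t) = a • (x ᵥ* W t)`. -/
theorem stmt14 (n m : ℕ) (a c θ : ℝ) (hθ : 0 < θ)
    (Φ : ℕ → Matrix (Fin n) (Fin m) ℝ)
    (W W' : ℕ → Matrix (Fin n) (Fin m) ℝ)
    (hW : ∀ t, W (t + 1) = W t + c • Φ t)
    (hW'0 : W' 0 = θ⁻¹ • W 0)
    (hW' : ∀ t, W' (t + 1) = W' t + (c / θ) • Φ t) :
    ∀ (t : ℕ) (x : Fin n → ℝ),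
      (a * θ) • (x ᵥ* W' t) = a • (x ᵥ* W t) := by
  have key : ∀ t, W' t = θ⁻¹ • W t := by
    intro t
    induction t with
    | zero => exact hW'0
    | succ t ih =>
      rw [hW', hW, ih, smul_add, smul_smul, div_eq_mul_inv, mul_comm c, ← smul_smul]
  intro t x
  rw [key]; ext j; simp [vecMul, dotProduct, Finset.mul_sum]; ring_nf; rw [Finset.sum_congr rfl]; intro i _; field_simp
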